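/- arXiv:2502.20768 — 4 statements merged into one kernel-verified Lean document; each statement's English description precedes it below -/
import Mathlib

section
/- (Mond–Pečarić) Let H be a complex Hilbert space, T a bounded self-adjoint operator on H with m·I ≤ T ≤ M·I for real numbers m ≤ M, and f : [m,M] → ℝ a continuous convex function. Then for every x ∈ H with ‖x‖ = 1, f(⟨Tx, x⟩) ≤ ⟨f(T)x, x⟩, where f(T) is defined via the continuous functional calculus and ⟨Tx,x⟩ is real since T is self-adjoint. -/
open scoped InnerProductSpace

/-- An approximate affine minorant of a convex continuous function on `[m, M]`,
touching within `ε` at a given point `t₀`. -/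
theorem exists_affine_minorant_of_convexOn {m M : ℝ} {f : ℝ → ℝ}
    (hconv : ConvexOn ℝ (Set.Icc m M) f) (hcont : ContinuousOn f (Set.Icc m M))
    {t₀ : ℝ} (ht₀ : t₀ ∈ Set.Icc m M) {ε : ℝ} (hε : 0 < ε) :
    ∃ a c : ℝ, (∀ t ∈ Set.Icc m M, a + c * t ≤ f t) ∧ f t₀ - ε ≤ a + c * t₀ := by
  obtain ⟨u, hu, hmin⟩ := isCompact_Icc.exists_isMinOn ⟨t₀, ht₀⟩ hcont
  have hB : ∀ t ∈ Set.Icc m M, f u ≤ f t := fun t ht => hmin ht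
  obtain ⟨δ₀, hδ₀, hδ⟩ := Metric.continuousWithinAt_iff.mp (hcont t₀ ht₀) (ε/2) (by linarith)
  rcases eq_or_lt_of_le ht₀.1 with hm | hm
  · -- t₀ = m : left endpoint
    set c := min 0 ((f u - (f t₀ - ε)) / δ₀) with hc
    refine ⟨f t₀ - ε - c * t₀, c, ?_, le_of_eq (by ring)⟩
    intro t ht
    have hc0 : c ≤ 0 := min_le_left _ _
    have hc1 : c * δ₀ ≤ f u - (f t₀ - ε) := by
      have := min_le_right 0 ((f u - (f t₀ - ε)) / δ₀)
      calc c * δ₀ ≤ ((f u - (f t₀ - ε)) / δ₀) * δ₀ := by nlinarith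
        _ = f u - (f t₀ - ε) := div_mul_cancel₀ _ hδ₀.ne'
    have htt : t₀ ≤ t := hm ▸ ht.1
    by_cases hlt : t - t₀ < δ₀
    · have h1 := hδ ht (by rw [Real.dist_eq, abs_of_nonneg (by linarith)]; linarith)
      rw [Real.dist_eq] at h1
      have h2 := abs_lt.mp h1
      nlinarith
    · push_neg at hlt
      have h3 : c * (t - t₀) ≤ c * δ₀ := by nlinarith
      have := hB t ht
      nlinarith
  rcases eq_or_lt_of_le ht₀.2 with hM | hM
  · -- t₀ = M : right endpoint
    set c := max 0 ((f t₀ - ε - f u) / δ₀) with hc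
    refine ⟨f t₀ - ε - c * t₀, c, ?_, le_of_eq (by ring)⟩
    intro t ht
    have hc0 : 0 ≤ c := le_max_left _ _
    have hc1 : f t₀ - ε - f u ≤ c * δ₀ := by
      have := le_max_right 0 ((f t₀ - ε - f u) / δ₀)
      calc f t₀ - ε - f u = ((f t₀ - ε - f u) / δ₀) * δ₀ := (div_mul_cancel₀ _ hδ₀.ne').symm
        _ ≤ c * δ₀ := by nlinarith
    have htt : t ≤ t₀ := hM ▸ ht.2
    by_cases hlt : t₀ - t < δ₀
    · have h1 := hδ ht (by rw [Real.dist_eq, abs_of_nonpos (by linarith)]; linarith)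
      rw [Real.dist_eq] at h1
      have h2 := abs_lt.mp h1
      nlinarith
    · push_neg at hlt
      have h3 : c * (t - t₀) ≤ c * (-δ₀) := by nlinarith
      have := hB t ht
      nlinarith
  · -- interior point
    set cL := (f m - f t₀) / (m - t₀) with hcL'
    set cR := (f M - f t₀) / (M - t₀) with hcR'
    set C := max |cL| |cR| with hC'
    have hC0 : 0 ≤ C := le_trans (abs_nonneg _) (le_max_left _ _)
    set δ := min (min δ₀ (t₀ - m)) (ε / (2 * (C + 1))) with hδ'
    have hδpos : 0 < δ := by
      apply lt_min (lt_min hδ₀ (by linarith))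
      positivity
    have hδle₀ : δ ≤ δ₀ := le_trans (min_le_left _ _) (min_le_left _ _)
    have hδlem : δ ≤ t₀ - m := le_trans (min_le_left _ _) (min_le_right _ _)
    have hδleε : δ ≤ ε / (2 * (C + 1)) := min_le_right _ _
    set t₁ := t₀ - δ with ht₁'
    have ht₁ : t₁ ∈ Set.Icc m M := ⟨by simp only [ht₁']; linarith, by simp only [ht₁']; linarith [ht₀.2]⟩
    have ht₁ne : t₁ ≠ t₀ := by simp only [ht₁']; intro h; nlinarith [sub_eq_iff_eq_add.mp h]
    set c := (f t₁ - f t₀) / (t₁ - t₀) with hc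
    have hmmem : m ∈ Set.Icc m M := ⟨le_refl _, le_trans ht₀.1 ht₀.2⟩
    have hMmem : M ∈ Set.Icc m M := ⟨le_trans ht₀.1 ht₀.2, le_refl _⟩
    have hcL : cL ≤ c :=
      hconv.secant_mono ht₀ hmmem ht₁ hm.ne ht₁ne (by simp only [ht₁']; linarith)
    have hcR : c ≤ cR :=
      hconv.secant_mono ht₀ ht₁ hMmem ht₁ne hM.ne' (by simp only [ht₁']; linarith [ht₀.2])
    have hcabs : |c| ≤ C := by
      rw [abs_le]
      constructor
      · calc -C ≤ -|cL| := by simp [hC']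
          _ ≤ cL := neg_abs_le _
          _ ≤ c := hcL
      · calc c ≤ cR := hcR
          _ ≤ |cR| := le_abs_self _
          _ ≤ C := le_max_right _ _
    refine ⟨f t₀ - ε - c * t₀, c, ?_, le_of_eq (by ring)⟩
    intro t ht
    have key : c * (t - t₀) ≤ f t - f t₀ + ε := by
      rcases lt_trichotomy t t₀ with h | h | h
      · by_cases h2 : t ≤ t₁
        · have hs : (f t - f t₀) / (t - t₀) ≤ c :=
            hconv.secant_mono ht₀ ht ht₁ h.ne ht₁ne h2
          have h3 := mul_le_mul_of_nonpos_right hs (by linarith : t - t₀ ≤ 0)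
          rw [div_mul_cancel₀ _ (by linarith : t - t₀ ≠ 0)] at h3
          linarith
        · push_neg at h2
          have hdist : |t - t₀| < δ := by
            rw [abs_of_nonpos (by linarith)]
            simp only [ht₁'] at h2; linarith
          have h1 := hδ ht (by rw [Real.dist_eq]; exact lt_of_lt_of_le hdist hδle₀)
          rw [Real.dist_eq] at h1
          have h2' := abs_lt.mp h1
          have h4 : c * (t - t₀) ≤ |c| * δ := by
            calc c * (t - t₀) ≤ |c * (t - t₀)| := le_abs_self _
              _ = |c| * |t - t₀| := abs_mul _ _
              _ ≤ |c| * δ := by nlinarith [abs_nonneg c]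
          have h5 : |c| * δ ≤ ε / 2 := by
            calc |c| * δ ≤ C * (ε / (2 * (C + 1))) := by nlinarith [abs_nonneg c]
              _ ≤ ε / 2 := by
                  rw [show C * (ε / (2 * (C + 1))) = C * ε / (2 * (C + 1)) from by ring,
                    div_le_div_iff₀ (by positivity) (by norm_num : (0:ℝ) < 2)]
                  nlinarith
          linarith
      · simp [h]; linarith
      · have hs : c ≤ (f t - f t₀) / (t - t₀) :=
          hconv.secant_mono ht₀ ht₁ ht ht₁ne h.ne' (by simp only [ht₁']; linarith)
        have h3 := mul_le_mul_of_nonneg_right hs (by linarith : (0:ℝ) ≤ t - t₀)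
        rw [div_mul_cancel₀ _ (by linarith : t - t₀ ≠ 0)] at h3
        linarith
    linarith



/-- (Mond–Pečarić) If `T` is a bounded self-adjoint operator on a complex Hilbert space `H`
with spectrum contained in `[m, M]` (equivalently `m•I ≤ T ≤ M•I`), and `f : [m, M] → ℝ` is
continuous and convex, then `f(⟨Tx, x⟩) ≤ ⟨f(T)x, x⟩` for every unit vector `x`, where `f(T)`
is given by the continuous functional calculus. -/
theorem mond_pecaric_hilbert_space
    {H : Type*} [NormedAddCommGroup H] [InnerProductSpace ℂ H] [CompleteSpace H]
    (T : H →L[ℂ] H) (hT : IsSelfAdjoint T)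
    (m M : ℝ) (hmM : m ≤ M) (hspec : spectrum ℝ T ⊆ Set.Icc m M)
    (f : ℝ → ℝ) (hconv : ConvexOn ℝ (Set.Icc m M) f)
    (hcont : ContinuousOn f (Set.Icc m M))
    (x : H) (hx : ‖x‖ = 1) :
    f (⟪T x, x⟫_ℂ).re ≤ (⟪(cfc f T) x, x⟫_ℂ).re := by
  have hfT : ContinuousOn f (spectrum ℝ T) := hcont.mono hspec
  set t₀ := (⟪T x, x⟫_ℂ).re with ht₀'
  -- monotonicity of `S ↦ re ⟪S x, x⟫` along the Loewner order
  have hq : ∀ S₁ S₂ : H →L[ℂ] H, S₁ ≤ S₂ → (⟪S₁ x, x⟫_ℂ).re ≤ (⟪S₂ x, x⟫_ℂ).re := by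
    intro S₁ S₂ h
    have h2 := ((ContinuousLinearMap.le_def S₁ S₂).mp h).inner_nonneg_left x
    simp only [ContinuousLinearMap.reApplyInnerSelf, ContinuousLinearMap.sub_apply,
      inner_sub_left, map_sub] at h2
    have h2' : (0:ℝ) ≤ (⟪S₂ x, x⟫_ℂ).re - (⟪S₁ x, x⟫_ℂ).re := by
      simpa using (Complex.le_def.mp h2).1
    linarith
  have hrel : ∀ r : ℝ, (⟪(algebraMap ℝ (H →L[ℂ] H) r) x, x⟫_ℂ).re = r := by
    intro r
    rw [Algebra.algebraMap_eq_smul_one]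
    have h1 : ((r • (1 : H →L[ℂ] H)) x) = r • x := rfl
    rw [h1, show (⟪r • x, x⟫_ℂ) = r • ⟪x, x⟫_ℂ from inner_smul_real_left x x r,
      Complex.real_smul, Complex.re_ofReal_mul,
      show (⟪x, x⟫_ℂ).re = ‖x‖ ^ 2 from inner_self_eq_norm_sq (𝕜 := ℂ) x, hx]
    ring
  have hm' : m ≤ t₀ := by
    have h := hq _ _ (algebraMap_le_of_le_spectrum (fun t ht => (hspec ht).1) hT)
    rwa [hrel] at h
  have hM' : t₀ ≤ M := by
    have h := hq _ _ (le_algebraMap_of_spectrum_le (fun t ht => (hspec ht).2) hT)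
    rwa [hrel] at h
  refine le_of_forall_pos_le_add ?_
  intro ε hε
  obtain ⟨a, c, hle, htouch⟩ :=
    exists_affine_minorant_of_convexOn hconv hcont ⟨hm', hM'⟩ hε
  have hcfc : cfc (fun t : ℝ => a + c * t) T = algebraMap ℝ (H →L[ℂ] H) a + c • T := by
    rw [cfc_add T (fun _ => a) (fun t => c * t) (by fun_prop) (by fun_prop),
      cfc_const a T, cfc_const_mul c (fun t : ℝ => t) T (by fun_prop), cfc_id' ℝ T]
  have hmono : cfc (fun t : ℝ => a + c * t) T ≤ cfc f T :=
    cfc_mono (fun t ht => hle t (hspec ht)) (by fun_prop) hfT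
  have h5 := hq _ _ hmono
  rw [hcfc] at h5
  have h6 : (⟪(algebraMap ℝ (H →L[ℂ] H) a + c • T) x, x⟫_ℂ).re = a + c * t₀ := by
    rw [ContinuousLinearMap.add_apply, inner_add_left, Complex.add_re, hrel a]
    have h2 : ((c • T) x) = c • T x := rfl
    rw [h2, show (⟪c • T x, x⟫_ℂ) = c • ⟪T x, x⟫_ℂ from inner_smul_real_left (T x) x c,
      Complex.real_smul, Complex.re_ofReal_mul]
  rw [h6] at h5
  linarith
end

section
/- (Hölder–McCarty, first inequality) Let H be a complex Hilbert space, T a positive bounded operator on H, and r ≥ 1 a real number. Then for every nonzero x ∈ H, (⟨Tx, x⟩)^r ≤ ‖x‖^{2(r-1)} · ⟨T^r x, x⟩, where T^r is defined by continuous functional calculus and ⟨Tx,x⟩, ⟨T^r x, x⟩ are nonnegative reals. -/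
open scoped InnerProductSpace

/-- (Hölder–McCarty, first inequality) If `T` is a positive bounded operator on a complex
Hilbert space and `r ≥ 1`, then `⟨Tx, x⟩^r ≤ ‖x‖^(2(r-1)) * ⟨T^r x, x⟩` for every nonzero `x`,
where `T^r` is given by the continuous functional calculus. -/
theorem holder_mccarty_rpow_ge_one
    {H : Type*} [NormedAddCommGroup H] [InnerProductSpace ℂ H] [CompleteSpace H]
    (T : H →L[ℂ] H) (hT : T.IsPositive)
    (r : ℝ) (hr : 1 ≤ r) (x : H) (hx : x ≠ 0) :
    (⟪T x, x⟫_ℂ).re ^ r ≤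
      ‖x‖ ^ (2 * (r - 1)) * (⟪(cfc (fun u : ℝ => u ^ r) T) x, x⟫_ℂ).re := by
  have hTsa : IsSelfAdjoint T := hT.isSelfAdjoint
  have hT0 : (0 : H →L[ℂ] H) ≤ T := (T.nonneg_iff_isPositive).mpr hT
  have hspec : ∀ t ∈ spectrum ℝ T, 0 ≤ t := fun t ht => spectrum_nonneg_of_nonneg hT0 ht
  have hcont : ContinuousOn (fun u : ℝ => u ^ r) (spectrum ℝ T) :=
    (Real.continuous_rpow_const (by linarith)).continuousOn
  have hn : (0:ℝ) < ‖x‖ := norm_pos_iff.mpr hx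
  set a : ℝ := (⟪T x, x⟫_ℂ).re with ha
  have ha0 : 0 ≤ a := hT.re_inner_nonneg_left x
  -- positivity of cfc
  have hcfc_pos : (cfc (fun u : ℝ => u ^ r) T).IsPositive := by
    rw [← ContinuousLinearMap.nonneg_iff_isPositive]
    exact cfc_nonneg fun t ht => Real.rpow_nonneg (hspec t ht) r
  have hRHS0 : 0 ≤ (⟪(cfc (fun u : ℝ => u ^ r) T) x, x⟫_ℂ).re := hcfc_pos.re_inner_nonneg_left x
  rcases eq_or_lt_of_le ha0 with h0 | hapos
  · rw [← h0, Real.zero_rpow (by linarith)]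
    positivity
  · set b : ℝ := a / ‖x‖ ^ 2 with hb
    have hbpos : 0 < b := div_pos hapos (by positivity)
    set c : ℝ := b ^ r - r * b ^ r with hc
    set d : ℝ := r * b ^ (r - 1) with hd
    -- scalar inequality on the spectrum
    have hkey : ∀ t ∈ spectrum ℝ T, c + d * t ≤ t ^ r := by
      intro t ht
      have ht0 := hspec t ht
      have hs : -1 ≤ t / b - 1 := by
        have : 0 ≤ t / b := div_nonneg ht0 hbpos.le
        linarith
      have := one_add_mul_self_le_rpow_one_add hs hr
      have heq : (1 + (t / b - 1)) = t / b := by ring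
      rw [heq] at this
      -- this : 1 + r * (t/b - 1) ≤ (t/b)^r
      have hdiv : (t / b) ^ r = t ^ r / b ^ r := Real.div_rpow ht0 hbpos.le r
      rw [hdiv] at this
      have hbr : 0 < b ^ r := Real.rpow_pos_of_pos hbpos r
      have := (mul_le_mul_of_nonneg_left this hbr.le)
      have hb1 : b ^ (r - 1) = b ^ r / b := by
        rw [Real.rpow_sub hbpos, Real.rpow_one]
      calc c + d * t = b ^ r * (1 + r * (t / b - 1)) := by
            rw [hc, hd, hb1]; field_simp; ring
        _ ≤ b ^ r * (t ^ r / b ^ r) := by exact mul_le_mul_of_nonneg_left ‹1 + r * (t / b - 1) ≤ t ^ r / b ^ r› hbr.le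
        _ = t ^ r := by field_simp
    -- operator inequality
    have hop : cfc (fun u : ℝ => c + d * u) T ≤ cfc (fun u : ℝ => u ^ r) T :=
      cfc_mono hkey (by fun_prop) hcont
    have haff : cfc (fun u : ℝ => c + d * u) T = algebraMap ℝ (H →L[ℂ] H) c + d • T := by
      rw [cfc_add (a := T) (fun _ : ℝ => c) (fun u : ℝ => d * u),
        cfc_const c T, cfc_const_mul d (fun u : ℝ => u) T, cfc_id' ℝ T]
    rw [haff] at hop
    have hineq : c * ‖x‖ ^ 2 + d * a ≤ (⟪(cfc (fun u : ℝ => u ^ r) T) x, x⟫_ℂ).re := by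
      have hpos := (ContinuousLinearMap.le_def _ _).mp hop
      have := hpos.re_inner_nonneg_left x
      have e1 : ∀ (s : ℝ) (y : H), (⟪(s • y : H), x⟫_ℂ).re = s * (⟪y, x⟫_ℂ).re := by
        intro s y
        rw [@RCLike.real_smul_eq_coe_smul ℂ, inner_smul_real_left, Complex.real_smul,
          Complex.mul_re]
        simp
      have e2 : (⟪(x : H), x⟫_ℂ).re = ‖x‖ ^ 2 := by
        exact @inner_self_eq_norm_sq ℂ H _ _ _ x
      have hcalc : (⟪(algebraMap ℝ (H →L[ℂ] H) c + d • T) x, x⟫_ℂ).re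
          = c * ‖x‖ ^ 2 + d * a := by
        rw [ContinuousLinearMap.add_apply, inner_add_left, Complex.add_re,
          Algebra.algebraMap_eq_smul_one, ContinuousLinearMap.smul_apply,
          ContinuousLinearMap.one_apply, ContinuousLinearMap.smul_apply, e1, e1, e2]
      rw [ContinuousLinearMap.coe_sub', Pi.sub_apply, inner_sub_left, map_sub,
        sub_nonneg] at this
      exact le_of_eq_of_le hcalc.symm this
    -- arithmetic wrap-up
    have hab : a = b * ‖x‖ ^ 2 := by rw [hb, div_mul_cancel₀ _ (pow_pos hn 2).ne']
    have hsum : c * ‖x‖ ^ 2 + d * a = b ^ r * ‖x‖ ^ 2 := by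
      rw [hc, hd, hab]
      have h3 : b ^ (r - 1) * b = b ^ r := by
        nth_rewrite 2 [← Real.rpow_one b]
        rw [← Real.rpow_add hbpos]
        ring_nf
      linear_combination (r * ‖x‖ ^ 2) * h3
    rw [hsum] at hineq
    have hfinal : a ^ r = b ^ r * ‖x‖ ^ 2 * ‖x‖ ^ (2 * (r - 1)) := by
      rw [hab, Real.mul_rpow hbpos.le (by positivity)]
      have h1 : ((‖x‖ ^ 2 : ℝ)) ^ r = ‖x‖ ^ (2 * r) := by
        rw [← Real.rpow_natCast ‖x‖ 2, ← Real.rpow_mul hn.le]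
        norm_num
      rw [h1]
      have h2 : ‖x‖ ^ (2 * r) = ‖x‖ ^ (2:ℝ) * ‖x‖ ^ (2 * (r - 1)) := by
        rw [← Real.rpow_add hn]
        ring_nf
      rw [h2, Real.rpow_two]
      ring
    rw [hfinal]
    calc b ^ r * ‖x‖ ^ 2 * ‖x‖ ^ (2 * (r - 1))
        ≤ (⟪(cfc (fun u : ℝ => u ^ r) T) x, x⟫_ℂ).re * ‖x‖ ^ (2 * (r - 1)) := by
          exact mul_le_mul_of_nonneg_right hineq (by positivity)
      _ = ‖x‖ ^ (2 * (r - 1)) * (⟪(cfc (fun u : ℝ => u ^ r) T) x, x⟫_ℂ).re := by ring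
end

section
/- (Hölder–McCarty, second inequality) Let H be a complex Hilbert space, T a positive bounded operator on H, and 0 < r ≤ 1 a real number. Then for every nonzero x ∈ H, (⟨Tx, x⟩)^r ≥ ‖x‖^{2(r-1)} · ⟨T^r x, x⟩. -/
open scoped InnerProductSpace

/-- Tangent-line inequality for the concave function `u ↦ u ^ r` with `0 < r ≤ 1`. -/
private lemma tangent_rpow_ineq {u lam r : ℝ} (hu : 0 ≤ u) (hl : 0 < lam)
    (hr0 : 0 < r) (hr1 : r ≤ 1) :
    u ^ r ≤ r * lam ^ (r - 1) * u + (1 - r) * lam ^ r := by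
  have hg : u ^ r * lam ^ (1 - r) ≤ r * u + (1 - r) * lam :=
    Real.geom_mean_le_arith_mean2_weighted hr0.le (by linarith) hu hl.le (by ring)
  have h0 : lam ^ (1 - r) * lam ^ (r - 1) = 1 := by
    rw [← Real.rpow_add hl]
    norm_num
  have h2 : lam ^ r = lam ^ (r - 1) * lam := by
    calc lam ^ r = lam ^ ((r - 1) + 1) := by norm_num
    _ = lam ^ (r - 1) * lam ^ (1 : ℝ) := Real.rpow_add hl _ _
    _ = lam ^ (r - 1) * lam := by rw [Real.rpow_one]
  calc u ^ r = (u ^ r * lam ^ (1 - r)) * lam ^ (r - 1) := by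
        rw [mul_assoc, h0, mul_one]
    _ ≤ (r * u + (1 - r) * lam) * lam ^ (r - 1) :=
        mul_le_mul_of_nonneg_right hg (Real.rpow_nonneg hl.le _)
    _ = r * lam ^ (r - 1) * u + (1 - r) * lam ^ r := by rw [h2]; ring

/-- (Hölder–McCarty, second inequality) If `T` is a positive bounded operator on a complex
Hilbert space and `0 < r ≤ 1`, then `⟨Tx, x⟩^r ≥ ‖x‖^(2(r-1)) * ⟨T^r x, x⟩` for every nonzero `x`,
where `T^r` is given by the continuous functional calculus. -/
theorem holder_mccarty_rpow_le_one
    {H : Type*} [NormedAddCommGroup H] [InnerProductSpace ℂ H] [CompleteSpace H]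
    (T : H →L[ℂ] H) (hT : T.IsPositive)
    (r : ℝ) (hr0 : 0 < r) (hr1 : r ≤ 1) (x : H) (hx : x ≠ 0) :
    ‖x‖ ^ (2 * (r - 1)) * (⟪(cfc (fun u : ℝ => u ^ r) T) x, x⟫_ℂ).re ≤
      (⟪T x, x⟫_ℂ).re ^ r := by
  have hTsa : IsSelfAdjoint T := hT.isSelfAdjoint
  have hT0 : (0 : H →L[ℂ] H) ≤ T := (ContinuousLinearMap.nonneg_iff_isPositive T).mpr hT
  have hspec : ∀ u ∈ spectrum ℝ T, 0 ≤ u := fun u hu => spectrum_nonneg_of_nonneg hT0 hu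
  have hcont : ContinuousOn (fun u : ℝ => u ^ r) (spectrum ℝ T) :=
    (Real.continuous_rpow_const hr0.le).continuousOn
  set P : ℝ := (⟪(cfc (fun u : ℝ => u ^ r) T) x, x⟫_ℂ).re with hP
  set m : ℝ := (⟪T x, x⟫_ℂ).re with hm
  have hm0 : 0 ≤ m := hT.re_inner_nonneg_left x
  have hn0 : (0 : ℝ) < ‖x‖ ^ 2 := by
    have := norm_pos_iff.mpr hx
    positivity
  -- key inequality from the operator tangent line inequality
  have key : ∀ lam : ℝ, 0 < lam →
      P ≤ r * lam ^ (r - 1) * m + (1 - r) * lam ^ r * ‖x‖ ^ 2 := by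
    intro lam hl
    have hle : cfc (fun u : ℝ => u ^ r) T ≤
        cfc (fun u : ℝ => r * lam ^ (r - 1) * u + (1 - r) * lam ^ r) T :=
      cfc_mono (fun u hu => tangent_rpow_ineq (hspec u hu) hl hr0 hr1) hcont (by fun_prop)
    have heq : cfc (fun u : ℝ => r * lam ^ (r - 1) * u + (1 - r) * lam ^ r) T
        = (r * lam ^ (r - 1)) • T + ((1 - r) * lam ^ r) • (1 : H →L[ℂ] H) := by
      rw [cfc_add (a := T) (fun u : ℝ => r * lam ^ (r - 1) * u)
          (fun _ : ℝ => (1 - r) * lam ^ r) (by fun_prop) (by fun_prop),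
        cfc_const_mul (r * lam ^ (r - 1)) (fun u : ℝ => u) T (by fun_prop),
        cfc_id' ℝ T, cfc_const ((1 - r) * lam ^ r) T, Algebra.algebraMap_eq_smul_one]
    rw [heq] at hle
    have hpos := (ContinuousLinearMap.le_def _ _).mp hle
    have hinner := hpos.re_inner_nonneg_left x
    have hxx : (⟪x, x⟫_ℂ).re = ‖x‖ ^ 2 := by
      simpa using @inner_self_eq_norm_sq ℂ _ _ _ _ x
    have hre : ∀ (c : ℝ) (y : H), (⟪c • y, x⟫_ℂ).re = c * (⟪y, x⟫_ℂ).re := by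
      intro c y
      rw [RCLike.real_smul_eq_coe_smul (K := ℂ) c y, inner_smul_left]
      simp [Complex.mul_re]
    simp only [ContinuousLinearMap.sub_apply, ContinuousLinearMap.add_apply,
      ContinuousLinearMap.smul_apply, ContinuousLinearMap.one_apply,
      inner_sub_left, inner_add_left, map_sub, map_add,
      RCLike.re_to_complex, hre, hxx] at hinner
    linarith
  -- rewriting the norm power
  have hnorm : ‖x‖ ^ (2 * (r - 1)) = (‖x‖ ^ 2 : ℝ) ^ (r - 1) := by
    rw [← Real.rpow_natCast ‖x‖ 2, ← Real.rpow_mul (norm_nonneg x)]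
    norm_num
  rcases eq_or_lt_of_le hm0 with hmz | hmpos
  · -- ⟪Tx, x⟫ = 0 : show P ≤ 0 and conclude
    have hPle : P ≤ 0 := by
      have htend : Filter.Tendsto (fun lam : ℝ => r * lam ^ (r - 1) * m
          + (1 - r) * lam ^ r * ‖x‖ ^ 2) (nhdsWithin 0 (Set.Ioi 0)) (nhds 0) := by
        have h1 : Filter.Tendsto (fun lam : ℝ => lam ^ r) (nhdsWithin 0 (Set.Ioi 0))
            (nhds 0) := by
          have := (Real.continuous_rpow_const hr0.le).continuousAt (x := (0 : ℝ))
          have h0 : (0 : ℝ) ^ r = 0 := Real.zero_rpow hr0.ne'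
          simpa [ContinuousAt, h0] using this.mono_left nhdsWithin_le_nhds
        have : Filter.Tendsto (fun lam : ℝ => (1 - r) * lam ^ r * ‖x‖ ^ 2)
            (nhdsWithin 0 (Set.Ioi 0)) (nhds ((1 - r) * 0 * ‖x‖ ^ 2)) := by
          exact ((h1.const_mul (1 - r)).mul_const _)
        simpa [← hmz] using this
      refine ge_of_tendsto htend ?_
      filter_upwards [self_mem_nhdsWithin] with lam hl
      exact key lam hl
    calc ‖x‖ ^ (2 * (r - 1)) * P ≤ 0 :=
          mul_nonpos_of_nonneg_of_nonpos (Real.rpow_nonneg (norm_nonneg x) _) hPle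
      _ = m ^ r := by rw [← hmz, Real.zero_rpow hr0.ne']
  · -- ⟪Tx, x⟫ > 0 : use the optimal lam
    set lam : ℝ := m / ‖x‖ ^ 2 with hlam
    have hl : 0 < lam := div_pos hmpos hn0
    have hmln : m = lam * ‖x‖ ^ 2 := by rw [hlam, div_mul_cancel₀ _ hn0.ne']
    have hkey := key lam hl
    have hstep : r * lam ^ (r - 1) * m + (1 - r) * lam ^ r * ‖x‖ ^ 2
        = lam ^ r * ‖x‖ ^ 2 := by
      have h2 : lam ^ (r - 1) * lam = lam ^ r := by
        calc lam ^ (r - 1) * lam = lam ^ (r - 1) * lam ^ (1 : ℝ) := by rw [Real.rpow_one]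
          _ = lam ^ ((r - 1) + 1) := (Real.rpow_add hl _ _).symm
          _ = lam ^ r := by norm_num
      rw [hmln]
      calc r * lam ^ (r - 1) * (lam * ‖x‖ ^ 2) + (1 - r) * lam ^ r * ‖x‖ ^ 2
          = r * (lam ^ (r - 1) * lam) * ‖x‖ ^ 2 + (1 - r) * lam ^ r * ‖x‖ ^ 2 := by ring
        _ = lam ^ r * ‖x‖ ^ 2 := by rw [h2]; ring
    rw [hstep] at hkey
    have hlr : lam ^ r = m ^ r / (‖x‖ ^ 2 : ℝ) ^ r := by
      rw [hlam, Real.div_rpow hm0 hn0.le]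
    have hprod : (‖x‖ ^ 2 : ℝ) ^ (r - 1) * (‖x‖ ^ 2 : ℝ) = (‖x‖ ^ 2 : ℝ) ^ r := by
      calc (‖x‖ ^ 2 : ℝ) ^ (r - 1) * (‖x‖ ^ 2 : ℝ)
          = (‖x‖ ^ 2 : ℝ) ^ (r - 1) * (‖x‖ ^ 2 : ℝ) ^ (1 : ℝ) := by rw [Real.rpow_one]
        _ = (‖x‖ ^ 2 : ℝ) ^ ((r - 1) + 1) := (Real.rpow_add hn0 _ _).symm
        _ = (‖x‖ ^ 2 : ℝ) ^ r := by norm_num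
    have hfinal : (‖x‖ ^ 2 : ℝ) ^ (r - 1) * (lam ^ r * ‖x‖ ^ 2) = m ^ r := by
      calc (‖x‖ ^ 2 : ℝ) ^ (r - 1) * (lam ^ r * ‖x‖ ^ 2)
          = lam ^ r * ((‖x‖ ^ 2 : ℝ) ^ (r - 1) * (‖x‖ ^ 2 : ℝ)) := by ring
        _ = (m ^ r / (‖x‖ ^ 2 : ℝ) ^ r) * (‖x‖ ^ 2 : ℝ) ^ r := by rw [hlr, hprod]
        _ = m ^ r := div_mul_cancel₀ _ (Real.rpow_pos_of_pos hn0 r).ne'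
    calc ‖x‖ ^ (2 * (r - 1)) * P = (‖x‖ ^ 2 : ℝ) ^ (r - 1) * P := by rw [hnorm]
      _ ≤ (‖x‖ ^ 2 : ℝ) ^ (r - 1) * (lam ^ r * ‖x‖ ^ 2) :=
          mul_le_mul_of_nonneg_left hkey (Real.rpow_nonneg hn0.le _)
      _ = m ^ r := hfinal
end

section
/- In the C*-algebra M₂(ℂ), with x = [[1,1],[0,1]] and t = [[2,1],[1,2]] (which is positive definite), the matrix inequality (x* t x)³ ≤ ‖x‖⁴ · x* t³ x fails; that is, ‖x‖⁴ · x* t³ x − (x* t x)³ is not positive semidefinite. Hence the operator-order Hölder–McCarty inequality ⟨tx,x⟩^r ≤ ‖x‖^{2(r-1)} ⟨t^r x,x⟩ with r = 3 fails in the Hilbert M₂(ℂ)-module M₂(ℂ). -/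
open Matrix
open scoped ComplexOrder

theorem normBound : ‖Matrix.toEuclideanCLM (𝕜 := ℂ) !![(1:ℂ),1;1,2]‖ ≤ Real.sqrt 7 := by
  apply ContinuousLinearMap.opNorm_le_bound _ (Real.sqrt_nonneg 7)
  intro v
  have hv : v = (WithLp.equiv 2 (Fin 2 → ℂ)).symm (WithLp.equiv 2 (Fin 2 → ℂ) v) := rfl
  rw [hv, WithLp.equiv_symm_apply, Matrix.toEuclideanCLM_toLp]
  set w := WithLp.equiv 2 (Fin 2 → ℂ) v with hw
  rw [EuclideanSpace.norm_eq, EuclideanSpace.norm_eq, ← Real.sqrt_mul (by norm_num)]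
  apply Real.sqrt_le_sqrt
  simp only [Fin.sum_univ_two, Matrix.toLin'_apply, Matrix.mulVec, dotProduct,
    PiLp.toLp_apply, Fin.isValue, Matrix.cons_val', Matrix.cons_val_zero,
    Matrix.empty_val', Matrix.cons_val_fin_one, Matrix.cons_val_one, Matrix.head_cons,
    Matrix.head_fin_const, one_mul]
  have h1 : ‖w 0 + w 1‖ ≤ ‖w 0‖ + ‖w 1‖ := norm_add_le _ _
  have h2 : ‖w 0 + 2 * w 1‖ ≤ ‖w 0‖ + 2 * ‖w 1‖ := by
    calc ‖w 0 + 2 * w 1‖ ≤ ‖w 0‖ + ‖(2:ℂ) * w 1‖ := norm_add_le _ _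
    _ = ‖w 0‖ + 2 * ‖w 1‖ := by rw [norm_mul]; norm_num
  have h3 : (0:ℝ) ≤ ‖w 0 + w 1‖ := norm_nonneg _
  have h4 : (0:ℝ) ≤ ‖w 0 + 2 * w 1‖ := norm_nonneg _
  have h5 : (0:ℝ) ≤ ‖w 0‖ := norm_nonneg _
  have h6 : (0:ℝ) ≤ ‖w 1‖ := norm_nonneg _
  have e00 : !![(1:ℂ),1;1,2] 0 0 = 1 := rfl
  have e01 : !![(1:ℂ),1;1,2] 0 1 = 1 := rfl
  have e10 : !![(1:ℂ),1;1,2] 1 0 = 1 := rfl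
  have e11 : !![(1:ℂ),1;1,2] 1 1 = 2 := rfl
  simp only [e00, e01, e10, e11, one_mul]
  nlinarith [sq_nonneg (‖w 0‖ - ‖w 1‖), sq_nonneg (2*‖w 0‖ - ‖w 1‖)]

theorem pow4Bound : ‖Matrix.toEuclideanCLM (𝕜 := ℂ) !![(1:ℂ),1;0,1]‖ ^ 4 ≤ 7 := by
  set T := Matrix.toEuclideanCLM (𝕜 := ℂ) !![(1:ℂ),1;0,1] with hT
  have hsq : ‖T‖ * ‖T‖ = ‖star T * T‖ := by
    rw [ContinuousLinearMap.star_eq_adjoint]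
    exact (ContinuousLinearMap.norm_adjoint_comp_self T).symm
  have hst : star T * T = Matrix.toEuclideanCLM (𝕜 := ℂ) !![(1:ℂ),1;1,2] := by
    rw [hT, ← map_star, ← _root_.map_mul]
    congr 1
    rw [Matrix.star_eq_conjTranspose]
    have hct : (!![(1:ℂ),1;0,1])ᴴ = !![1,0;1,1] := by
      ext i j; fin_cases i <;> fin_cases j <;> simp
    rw [hct, Matrix.mul_fin_two]; norm_num
  have h2 : ‖T‖ * ‖T‖ ≤ Real.sqrt 7 := by rw [hsq, hst]; exact normBound
  have h7 : Real.sqrt 7 * Real.sqrt 7 = 7 := Real.mul_self_sqrt (by norm_num)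
  have hn : (0:ℝ) ≤ ‖T‖ := norm_nonneg _
  calc ‖T‖ ^ 4 = (‖T‖ * ‖T‖) * (‖T‖ * ‖T‖) := by ring
  _ ≤ Real.sqrt 7 * Real.sqrt 7 := by nlinarith [Real.sqrt_nonneg 7]
  _ = 7 := h7

/-- In the C⋆-algebra `M₂(ℂ)` (viewed as a Hilbert module over itself with `⟨x, y⟩ = x* y`),
with `x = !![1,1;0,1]` and `t = !![2,1;1,2]` (which is positive definite), the operator-order
Hölder–McCarty inequality `(x* t x)³ ≤ ‖x‖⁴ • (x* t³ x)` with `r = 3` fails: the matrix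
`‖x‖⁴ • (x* t³ x) − (x* t x)³` is not positive semidefinite, where `‖x‖` is the operator norm
of `x` acting on `ℂ²`. -/
theorem holder_mccarty_fails_in_M2
    (x t : Matrix (Fin 2) (Fin 2) ℂ)
    (hx : x = !![1, 1; 0, 1]) (ht : t = !![2, 1; 1, 2]) :
    t.PosDef ∧
      ¬ Matrix.PosSemidef
        (‖Matrix.toEuclideanCLM (𝕜 := ℂ) x‖ ^ 4 • (xᴴ * t ^ 3 * x) - (xᴴ * t * x) ^ 3) := by
  subst hx ht
  have hct : (!![(1:ℂ),1;0,1])ᴴ = !![1,0;1,1] := by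
    ext i j; fin_cases i <;> fin_cases j <;> simp
  constructor
  · refine posDef_iff_dotProduct_mulVec.mpr ⟨?_, ?_⟩
    · ext i j
      fin_cases i <;> fin_cases j <;>
        simp [Matrix.conjTranspose_apply, Complex.ext_iff]
    · intro v hv
      have e00 : !![(2:ℂ),1;1,2] 0 0 = 2 := rfl
      have e01 : !![(2:ℂ),1;1,2] 0 1 = 1 := rfl
      have e10 : !![(2:ℂ),1;1,2] 1 0 = 1 := rfl
      have e11 : !![(2:ℂ),1;1,2] 1 1 = 2 := rfl
      have hv2 : v 0 ≠ 0 ∨ v 1 ≠ 0 := by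
        by_contra hcon
        push_neg at hcon
        exact hv (funext fun i => by fin_cases i <;> simp [hcon.1, hcon.2])
      simp only [dotProduct, Matrix.mulVec, Fin.sum_univ_two, Pi.star_apply,
        e00, e01, e10, e11]
      rw [Complex.lt_def]
      constructor
      · simp only [Complex.add_re, Complex.mul_re, Complex.add_im, Complex.mul_im,
          Complex.zero_re, RCLike.star_def, Complex.conj_re, Complex.conj_im,
          Complex.re_ofNat, Complex.im_ofNat, Complex.one_re, Complex.one_im]
        rcases hv2 with h|h <;> have hpos := Complex.normSq_pos.mpr h <;>
          simp only [Complex.normSq_apply] at hpos <;>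
          nlinarith [sq_nonneg ((v 0).re + (v 1).re), sq_nonneg ((v 0).im + (v 1).im),
            sq_nonneg (v 0).re, sq_nonneg (v 0).im, sq_nonneg (v 1).re, sq_nonneg (v 1).im]
      · simp only [Complex.add_im, Complex.mul_im, Complex.add_re, Complex.mul_re,
          Complex.zero_im, RCLike.star_def, Complex.conj_re, Complex.conj_im,
          Complex.re_ofNat, Complex.im_ofNat, Complex.one_re, Complex.one_im]
        ring
  · intro h
    set c := ‖Matrix.toEuclideanCLM (𝕜 := ℂ) !![(1:ℂ),1;0,1]‖ with hc
    have hA : (!![(1:ℂ),1;0,1])ᴴ * (!![(2:ℂ),1;1,2]) ^ 3 * !![(1:ℂ),1;0,1]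
        = !![14,27;27,54] := by
      rw [hct, pow_succ, pow_succ, pow_succ, pow_zero, one_mul]
      simp only [Matrix.mul_fin_two]; norm_num
    have hB : ((!![(1:ℂ),1;0,1])ᴴ * (!![(2:ℂ),1;1,2]) * !![(1:ℂ),1;0,1]) ^ 3
        = !![98,183;183,342] := by
      rw [hct, pow_succ, pow_succ, pow_succ, pow_zero, one_mul]
      simp only [Matrix.mul_fin_two]; norm_num
    rw [hA, hB] at h
    have key := h.dotProduct_mulVec_nonneg ![17,-4]
    have heq : dotProduct (star ![(17:ℂ),-4])
        ((c ^ 4 • !![(14:ℂ),27;27,54] - !![(98:ℂ),183;183,342]) *ᵥ ![17,-4])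
        = ((c ^ 4 * 1238 - 8906 : ℝ) : ℂ) := by
      simp only [dotProduct, Matrix.mulVec, Fin.sum_univ_two, Pi.star_apply,
        Matrix.sub_apply, Matrix.smul_apply, Matrix.cons_val', Matrix.cons_val_zero,
        Matrix.empty_val', Matrix.cons_val_fin_one, Matrix.cons_val_one, Matrix.head_cons,
        Matrix.head_fin_const, Complex.real_smul]
      push_cast
      ring_nf
      simp [Complex.ext_iff]
      ring_nf
      constructor <;> trivial
    rw [heq] at key
    have h7 : c ^ 4 ≤ 7 := pow4Bound
    have : (0:ℝ) ≤ c ^ 4 * 1238 - 8906 := by exact_mod_cast key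
    nlinarith
end
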